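/- Let K/F be a cyclic field extension of degree n with Gal(K/F) = ⟨σ⟩, R = K[t;σ], and f = Σ_{i=0}^{m} a_i tⁱ ∈ R monic irreducible of degree m with gcrd(f,t) = 1 and deg(h) = mn. Let ν ∈ K, ρ ∈ Aut(K), F' = Fix(ρ) ∩ F with F/F' finite. Then the algebra S(ν,ρ,f) = (R_m,∘), with multiplication b∘c = (b(t) + νρ(b₀)t^m)·c(t) mod_r f, is a division algebra over F' if N_{K/F'}(a₀)·N_{K/F'}(ν) ≠ 1. -/

import Mathlib

namespace SkewPaper

/-- Data presenting a ring `R` as a skew polynomial ring `D[t;σ]` over a division ring `D`: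
`ι` embeds `D`, `t` is the variable, `t * ι a = ι (σ a) * t`, and every element of `R`
is uniquely a finite sum `∑ ι (coeff f i) * t^i`. -/
structure SkewPolyData (D R : Type*) [DivisionRing D] [Ring R] where
  σ : D ≃+* D
  ι : D →+* R
  t : R
  coeff : R → ℕ → D
  twist : ∀ a : D, t * ι a = ι (σ a) * t
  support_finite : ∀ f : R, (Function.support (coeff f)).Finite
  coeff_ext : ∀ f g : R, (∀ i, coeff f i = coeff g i) → f = g
  coeff_sum : ∀ (c : ℕ →₀ D) (i : ℕ),
    coeff (∑ j ∈ c.support, ι (c j) * t ^ j) i = c i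

/-- Two elements are similar if the left modules `R/Rf` and `R/Rg` are isomorphic. -/
def Sim {R : Type*} [Ring R] (f g : R) : Prop :=
  Nonempty ((R ⧸ Submodule.span R {f}) ≃ₗ[R] (R ⧸ Submodule.span R {g}))

/-- `g` divides `f` on the right. -/
def RDvd {R : Type*} [Ring R] (g f : R) : Prop := ∃ q, f = q * g

/-- `g` divides `f` on the left. -/
def LDvd {R : Type*} [Ring R] (g f : R) : Prop := ∃ q, f = g * q

/-- `Rf` is a two-sided ideal. -/
def RightInvariant {R : Type*} [Ring R] (f : R) : Prop := ∀ r : R, ∃ q, f * r = q * f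

/-- `g` is a greatest common right divisor of `a` and `h`. -/
def IsGcrd {R : Type*} [Ring R] (a h g : R) : Prop :=
  RDvd g a ∧ RDvd g h ∧ ∀ g' : R, RDvd g' a → RDvd g' h → RDvd g' g

namespace SkewPolyData

variable {D R : Type*} [DivisionRing D] [Ring R] (S : SkewPolyData D R)

/-- The degree of a skew polynomial (`deg 0 = 0` by convention of `sSup ∅`). -/
noncomputable def deg (f : R) : ℕ := sSup {i | S.coeff f i ≠ 0}

def Monic (f : R) : Prop := S.coeff f (S.deg f) = 1

/-- constant term -/
def const (f : R) : D := S.coeff f 0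

/-- `f` is irreducible: it is not a unit and has no proper factorization. -/
def Irred (f : R) : Prop :=
  ¬ IsUnit f ∧ ¬ ∃ g p : R, 1 ≤ S.deg g ∧ S.deg g < S.deg f ∧
      1 ≤ S.deg p ∧ S.deg p < S.deg f ∧ f = g * p

/-- `f` has a proper factorization. -/
def Reducible (f : R) : Prop :=
  ∃ g p : R, 1 ≤ S.deg g ∧ S.deg g < S.deg f ∧
      1 ≤ S.deg p ∧ S.deg p < S.deg f ∧ f = g * p

/-- `gcrd(f,t) = 1`: every common right divisor of `f` and `t` is a (degree-0) unit. -/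
def CoprimeT (f : R) : Prop := ∀ g : R, RDvd g f → RDvd g S.t → S.deg g = 0

/-- `F = C ∩ Fix(σ)` as a subset of `D`. -/
def Fset : Set D := {a | a ∈ Subring.center D ∧ S.σ a = a}

/-- `σ` has order `n` modulo inner automorphisms, with `σ^n = i_u`, `u` fixed by `σ`. -/
def OrderModInner (n : ℕ) (u : D) : Prop :=
  0 < n ∧ u ≠ 0 ∧ S.σ u = u ∧ (∀ z : D, (⇑S.σ)^[n] z = u * z * u⁻¹) ∧
  ∀ j : ℕ, 0 < j → j < n → ¬ ∃ w : D, w ≠ 0 ∧ ∀ z : D, (⇑S.σ)^[j] z = w * z * w⁻¹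

/-- Evaluation of a commutative polynomial with coefficients in (the image of) `F`
at an element `x` of `R`. -/
noncomputable def evalAt {F : Type*} [Field F] (ιF : F →+* D) (p : Polynomial F) (x : R) : R :=
  p.sum fun i a => S.ι (ιF a) * x ^ i

/-- `h` is the minimal central left multiple of `f`, with `h = ĥ(u⁻¹ tⁿ)` for a monic `ĥ ∈ F[x]`. -/
def IsMclm (n : ℕ) (u : D) {F : Type*} [Field F] (ιF : F →+* D)
    (f h : R) (hh : Polynomial F) : Prop :=
  h ∈ Subring.center R ∧ hh.Monic ∧
  h = S.evalAt ιF hh (S.ι u⁻¹ * S.t ^ n) ∧ (∃ g, h = g * f) ∧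
  ∀ (h' : R) (hh' : Polynomial F), hh' ≠ 0 →
    h' = S.evalAt ιF hh' (S.ι u⁻¹ * S.t ^ n) → (∃ g, h' = g * f) → S.deg h ≤ S.deg h'

/-- `h` factors into `k` irreducible elements of `R`. -/
def FactorsIntoIrred (h : R) (k : ℕ) : Prop :=
  ∃ fs : Fin k → R, (∀ i, S.Irred (fs i)) ∧ h = (List.ofFn fs).prod

/-- `modr g f` is the remainder of `g` under right division by `f`. -/
def IsModR (modr : R → R → R) : Prop :=
  ∀ g f : R, 1 ≤ S.deg f →
    (∃ q, g = q * f + modr g f) ∧ (modr g f = 0 ∨ S.deg (modr g f) < S.deg f)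

/-- The set `A = { d₀ + d₁ t + ⋯ + d_{lm-1} t^{lm-1} + ν ρ(d₀) t^{lm} }`. -/
def ASet (ν : D) (ρ : D ≃+* D) (lm : ℕ) : Set R :=
  {x | ∃ b : R, S.deg b < lm ∧ x = b + S.ι (ν * ρ (S.const b)) * S.t ^ lm}

/-- The twisted multiplication `b ∘ c = (b + ν ρ(b₀) t^{lm}) c  mod_r f`. -/
def circ (modr : R → R → R) (f : R) (ν : D) (ρ : D ≃+* D) (lm : ℕ) (b c : R) : R :=
  modr ((b + S.ι (ν * ρ (S.const b)) * S.t ^ lm) * c) f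

/-- All coefficients of `p` lie in the subfield (image of) `E`. -/
def CoeffsIn {E : Type*} [Field E] (ιE : E →+* D) (p : R) : Prop := ∀ i, ∃ e, ιE e = S.coeff p i

end SkewPolyData

/-- `D` has dimension `d2` over its center. -/
def CentralDim (D : Type*) [DivisionRing D] (d2 : ℕ) : Prop :=
  ∃ bas : Fin d2 → D,
    (∀ x : D, ∃ c : Fin d2 → D, (∀ i, c i ∈ Subring.center D) ∧ x = ∑ i, c i * bas i) ∧
    (∀ c : Fin d2 → D, (∀ i, c i ∈ Subring.center D) → ∑ i, c i * bas i = 0 → ∀ i, c i = 0)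

/-- `Fb` is finite-dimensional as a vector space over the subfield `F'` of `D`. -/
def FinDimOver {D : Type*} [DivisionRing D] (F' Fb : Set D) : Prop :=
  ∃ T : Finset D, ↑T ⊆ Fb ∧ ∀ a ∈ Fb, ∃ c : D → D, (∀ x ∈ T, c x ∈ F') ∧ a = ∑ x ∈ T, c x * x

/-- The column rank of a matrix over a division ring: the rank of the right `B`-module
generated by its columns. -/
noncomputable def colrank {k : ℕ} {B : Type*} [DivisionRing B]
    (M : Matrix (Fin k) (Fin k) B) : ℕ :=
  Module.finrank Bᵐᵒᵖ (Submodule.span Bᵐᵒᵖ (Set.range fun j : Fin k => fun i : Fin k => M i j))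

/-- `D` is presented as the cyclic algebra `(E/C, γ, aC)` of degree `d`, with maximal
subfield `E` embedded by `ιE`, `Gal(E/C) = ⟨γ⟩` and a generator `e` with `e^d = aC`. -/
def IsCyclicPresentation {D : Type*} [DivisionRing D] {C E : Type*} [Field C] [Field E]
    [Algebra C E] (ιE : E →+* D) (γ : E ≃ₐ[C] E) (d : ℕ) (e : D) (aC : C) : Prop :=
  (∀ a : D, a ∈ Subring.center D ↔ ∃ c : C, ιE (algebraMap C E c) = a) ∧
  Module.finrank C E = d ∧
  (∀ τ : E ≃ₐ[C] E, τ ∈ Subgroup.zpowers γ) ∧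
  (∀ z : E, e * ιE z = ιE (γ z) * e) ∧
  e ^ d = ιE (algebraMap C E aC) ∧
  (∀ x : D, ∃ c : Fin d → E, x = ∑ i, ιE (c i) * e ^ (i : ℕ))

/-- Multiplication of matrices with entries representing elements of `B = Nuc_r(S_f)`,
where entries multiply via `a ∘ b = ab mod_r f`. -/
def matmulB {R : Type*} [Ring R] (modr : R → R → R) (f : R) {k : ℕ}
    (M N : Fin k → Fin k → R) : Fin k → Fin k → R :=
  fun i j => ∑ l, modr (M i l * N l j) f

end SkewPaper

open SkewPaper

/-!
If `b ∘ c = 0`, then `b' c ∈ Rf` for `b' = b + νρ(b₀)tᵐ`. The left ideal `{x | x c ∈ Rf}` is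
principal, generated by a monic `d`, and right multiplication by `c` induces an isomorphism
`R/Rd ≅ R/Rf`: it is injective by the choice of `d` and surjective because `f` is irreducible, so
that `u c + v f = 1` for some `u, v`. Hence `deg d = m`, and `b' ∈ Rd` with `deg b' ≤ m` forces
`b' = ω d` with `ω = νρ(b₀)` its leading coefficient. The isomorphism commutes with left
multiplication by `t`, an `F'`-linear map of `R/Rg` whose determinant is `N(-g₀)` times a factor
depending only on `σ` and `m`; so `d` and `f` have constant terms of equal norm. Comparing constant
terms, `b₀ = νρ(b₀) d₀` with `b₀ ≠ 0` (as `ω ≠ 0`), and taking norms gives `N(a₀) N(ν) = 1`.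
-/

namespace SkewPaper.SkewPolyData

variable {D R : Type*} [DivisionRing D] [Ring R] (S : SkewPolyData D R)

noncomputable def ofFinsupp (c : ℕ →₀ D) : R := c.sum fun j a => S.ι a * S.t ^ j

theorem coeff_ofFinsupp (c : ℕ →₀ D) (i : ℕ) : S.coeff (S.ofFinsupp c) i = c i :=
  S.coeff_sum c i

noncomputable def toFinsupp (x : R) : ℕ →₀ D :=
  ⟨(S.support_finite x).toFinset, S.coeff x, fun i => by simp⟩

theorem toFinsupp_apply (x : R) (i : ℕ) : S.toFinsupp x i = S.coeff x i := rfl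

theorem ofFinsupp_toFinsupp (x : R) : S.ofFinsupp (S.toFinsupp x) = x :=
  S.coeff_ext _ _ fun i => S.coeff_ofFinsupp _ i

theorem ofFinsupp_add (c d : ℕ →₀ D) : S.ofFinsupp (c + d) = S.ofFinsupp c + S.ofFinsupp d :=
  Finsupp.sum_add_index' (fun _ => by simp) fun _ _ _ => by rw [map_add, add_mul]

theorem coeff_add (x y : R) (i : ℕ) : S.coeff (x + y) i = S.coeff x i + S.coeff y i := by
  rw [← S.ofFinsupp_toFinsupp x, ← S.ofFinsupp_toFinsupp y, ← ofFinsupp_add, coeff_ofFinsupp,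
    Finsupp.add_apply, coeff_ofFinsupp, coeff_ofFinsupp]

noncomputable def coeffAddHom (i : ℕ) : R →+ D :=
  AddMonoidHom.mk' (S.coeff · i) fun x y => S.coeff_add x y i

@[simp] theorem coeff_zero (i : ℕ) : S.coeff (0 : R) i = 0 := map_zero (S.coeffAddHom i)

theorem coeff_sub (x y : R) (i : ℕ) : S.coeff (x - y) i = S.coeff x i - S.coeff y i :=
  map_sub (S.coeffAddHom i) x y

theorem coeff_finsetSum {α : Type*} (s : Finset α) (g : α → R) (i : ℕ) :
    S.coeff (∑ j ∈ s, g j) i = ∑ j ∈ s, S.coeff (g j) i :=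
  map_sum (S.coeffAddHom i) g s

theorem coeff_ι_mul_t_pow (a : D) (j i : ℕ) :
    S.coeff (S.ι a * S.t ^ j) i = if j = i then a else 0 := by
  rw [← Finsupp.sum_single_index (h := fun j a => S.ι a * S.t ^ j) (by simp),
    ← ofFinsupp, coeff_ofFinsupp, Finsupp.single_apply]

theorem coeff_ι (a : D) (i : ℕ) : S.coeff (S.ι a) i = if i = 0 then a else 0 := by
  simpa [eq_comm] using S.coeff_ι_mul_t_pow a 0 i

theorem coeff_ι_mul (a : D) (x : R) (i : ℕ) : S.coeff (S.ι a * x) i = a * S.coeff x i := by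
  have h : S.ι a * x = S.ofFinsupp ((S.toFinsupp x).mapRange (a * ·) (mul_zero a)) := by
    conv_lhs => rw [← S.ofFinsupp_toFinsupp x]
    rw [ofFinsupp, ofFinsupp, Finsupp.sum_mapRange_index (fun _ => by simp), Finsupp.sum,
      Finsupp.sum, Finset.mul_sum]
    exact Finset.sum_congr rfl fun j _ => by rw [map_mul, mul_assoc]
  rw [h, coeff_ofFinsupp, Finsupp.mapRange_apply]
  rfl

theorem t_mul_eq_ofFinsupp (x : R) :
    S.t * x = S.ofFinsupp (((S.toFinsupp x).mapRange S.σ (map_zero S.σ)).mapDomain Nat.succ) := by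
  conv_lhs => rw [← S.ofFinsupp_toFinsupp x]
  rw [ofFinsupp, ofFinsupp, Finsupp.sum_mapDomain_index_inj Nat.succ_injective,
    Finsupp.sum_mapRange_index (fun _ => by simp), Finsupp.sum, Finsupp.sum, Finset.mul_sum]
  exact Finset.sum_congr rfl fun j _ => by rw [← mul_assoc, S.twist, mul_assoc, ← pow_succ']

theorem coeff_t_mul_succ (x : R) (i : ℕ) : S.coeff (S.t * x) (i + 1) = S.σ (S.coeff x i) := by
  rw [t_mul_eq_ofFinsupp, coeff_ofFinsupp, Finsupp.mapDomain_apply Nat.succ_injective]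
  rfl

theorem coeff_t_mul_zero (x : R) : S.coeff (S.t * x) 0 = 0 := by
  rw [t_mul_eq_ofFinsupp, coeff_ofFinsupp, Finsupp.mapDomain_of_notMem_range]
  rintro ⟨j, hj⟩
  exact Nat.succ_ne_zero j hj

theorem coeff_t_pow_mul (k : ℕ) (x : R) (i : ℕ) :
    S.coeff (S.t ^ k * x) i = if k ≤ i then (S.σ ^ k) (S.coeff x (i - k)) else 0 := by
  induction k generalizing i with
  | zero => simp
  | succ k ih =>
    rw [pow_succ', mul_assoc]
    rcases i with _ | i
    · simp [coeff_t_mul_zero]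
    · rw [coeff_t_mul_succ, ih, pow_succ', RingAut.mul_apply]
      split_ifs <;> first | omega | simp_all

theorem coeff_mul (x y : R) (k : ℕ) :
    S.coeff (x * y) k =
      ∑ i ∈ Finset.range (k + 1), S.coeff x i * (S.σ ^ i) (S.coeff y (k - i)) := by
  classical
  set g : ℕ → D := fun i => if i ≤ k then S.coeff x i * (S.σ ^ i) (S.coeff y (k - i)) else 0
  have hsupp : S.coeff (x * y) k = ∑ i ∈ (S.toFinsupp x).support, g i := by
    conv_lhs => rw [← S.ofFinsupp_toFinsupp x, ofFinsupp, Finsupp.sum, Finset.sum_mul]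
    rw [coeff_finsetSum]
    refine Finset.sum_congr rfl fun i _ => ?_
    rw [mul_assoc, coeff_ι_mul, coeff_t_pow_mul]
    simp only [g]
    split_ifs <;> simp [toFinsupp_apply]
  have hrange : ∑ i ∈ Finset.range (k + 1), S.coeff x i * (S.σ ^ i) (S.coeff y (k - i)) =
      ∑ i ∈ Finset.range (k + 1), g i :=
    Finset.sum_congr rfl fun i hi => by simp [g, Nat.lt_succ_iff.mp (Finset.mem_range.mp hi)]
  rw [hsupp, hrange]
  calc ∑ i ∈ (S.toFinsupp x).support, g i
      = ∑ i ∈ (S.toFinsupp x).support ∩ Finset.range (k + 1), g i := by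
        refine (Finset.sum_subset Finset.inter_subset_left fun i hi hi' => ?_).symm
        have hik : ¬ i ≤ k := fun hik => hi' (Finset.mem_inter.mpr ⟨hi, by simpa using hik⟩)
        simp [g, hik]
    _ = ∑ i ∈ Finset.range (k + 1), g i := by
        refine Finset.sum_subset Finset.inter_subset_right fun i hi hi' => ?_
        have hx : S.coeff x i = 0 := by
          by_contra hne
          exact hi' (Finset.mem_inter.mpr ⟨by simpa [toFinsupp] using hne, hi⟩)
        simp [g, hx]

theorem bddAbove_coeff_ne_zero (x : R) : BddAbove {i | S.coeff x i ≠ 0} :=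
  (S.support_finite x).bddAbove

theorem coeff_eq_zero_of_deg_lt {x : R} {i : ℕ} (h : S.deg x < i) : S.coeff x i = 0 := by
  by_contra hne
  exact (le_csSup (S.bddAbove_coeff_ne_zero x) hne).not_gt h

theorem deg_le_of_coeff_eq_zero {x : R} {d : ℕ} (h : ∀ i, d < i → S.coeff x i = 0) :
    S.deg x ≤ d :=
  csSup_le' fun i hi => by by_contra hc; exact hi (h i (by omega))

theorem le_deg_of_coeff_ne_zero {x : R} {i : ℕ} (h : S.coeff x i ≠ 0) : i ≤ S.deg x :=
  le_csSup (S.bddAbove_coeff_ne_zero x) h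

theorem deg_zero : S.deg (0 : R) = 0 :=
  Nat.le_zero.mp (S.deg_le_of_coeff_eq_zero fun i _ => S.coeff_zero i)

theorem ne_zero_of_coeff_ne_zero {x : R} {i : ℕ} (h : S.coeff x i ≠ 0) : x ≠ 0 := by
  rintro rfl
  exact h (S.coeff_zero i)

theorem coeff_deg_ne_zero {x : R} (hx : x ≠ 0) : S.coeff x (S.deg x) ≠ 0 := by
  obtain ⟨i, hi⟩ : ∃ i, S.coeff x i ≠ 0 := by
    by_contra! h
    exact hx (S.coeff_ext x 0 fun i => by rw [h i, coeff_zero])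
  exact Nat.sSup_mem ⟨i, hi⟩ (S.bddAbove_coeff_ne_zero x)

theorem ne_zero_of_one_le_deg {x : R} (h : 1 ≤ S.deg x) : x ≠ 0 := by
  rintro rfl
  rw [deg_zero] at h
  omega

theorem Monic.ne_zero {f : R} (hf : S.Monic f) : f ≠ 0 :=
  S.ne_zero_of_coeff_ne_zero (i := S.deg f) (by rw [hf]; exact one_ne_zero)

theorem coeff_mul_deg_add (x y : R) :
    S.coeff (x * y) (S.deg x + S.deg y) =
      S.coeff x (S.deg x) * (S.σ ^ S.deg x) (S.coeff y (S.deg y)) := by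
  rw [coeff_mul, Finset.sum_eq_single (S.deg x), Nat.add_sub_cancel_left]
  · intro i _ hi
    rcases Nat.lt_or_gt_of_ne hi with hlt | hgt
    · rw [S.coeff_eq_zero_of_deg_lt (i := S.deg x + S.deg y - i) (by omega), map_zero,
        mul_zero]
    · rw [S.coeff_eq_zero_of_deg_lt hgt, zero_mul]
  · simp

theorem coeff_mul_eq_zero_of_deg_add_lt {x y : R} {k : ℕ} (h : S.deg x + S.deg y < k) :
    S.coeff (x * y) k = 0 := by
  rw [coeff_mul]
  refine Finset.sum_eq_zero fun i _ => ?_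
  rcases Nat.lt_or_ge (S.deg x) i with hi | hi
  · rw [S.coeff_eq_zero_of_deg_lt hi, zero_mul]
  · rw [S.coeff_eq_zero_of_deg_lt (i := k - i) (by omega), map_zero, mul_zero]

theorem coeff_mul_deg_add_ne_zero {x y : R} (hx : x ≠ 0) (hy : y ≠ 0) :
    S.coeff (x * y) (S.deg x + S.deg y) ≠ 0 := by
  rw [coeff_mul_deg_add]
  exact _root_.mul_ne_zero (S.coeff_deg_ne_zero hx)
    ((map_ne_zero_iff _ (S.σ ^ S.deg x).injective).mpr (S.coeff_deg_ne_zero hy))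

theorem deg_mul {x y : R} (hx : x ≠ 0) (hy : y ≠ 0) : S.deg (x * y) = S.deg x + S.deg y :=
  le_antisymm (S.deg_le_of_coeff_eq_zero fun _ hi => S.coeff_mul_eq_zero_of_deg_add_lt hi)
    (S.le_deg_of_coeff_ne_zero (S.coeff_mul_deg_add_ne_zero hx hy))

theorem deg_ι_mul {a : D} (ha : a ≠ 0) (x : R) : S.deg (S.ι a * x) = S.deg x := by
  simp only [deg, coeff_ι_mul, ne_eq, _root_.mul_eq_zero, ha, false_or]

theorem eq_ι_coeff_zero_of_deg_eq_zero {x : R} (h : S.deg x = 0) : x = S.ι (S.coeff x 0) :=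
  S.coeff_ext _ _ fun i => by
    rw [coeff_ι]
    split_ifs with hi
    · rw [hi]
    · exact S.coeff_eq_zero_of_deg_lt (by omega)

theorem eq_ι_mul_of_eq_mul_of_deg_le {x w d : R} (hd : S.Monic d) (hx : x = w * d)
    (hdeg : S.deg x ≤ S.deg d) : x = S.ι (S.coeff x (S.deg d)) * d := by
  rcases eq_or_ne w 0 with rfl | hw
  · rw [hx, zero_mul, coeff_zero, map_zero, zero_mul]
  have hw0 : S.deg w = 0 := by
    have := S.deg_mul hw hd.ne_zero
    rw [← hx] at this
    omega
  rw [hx, S.eq_ι_coeff_zero_of_deg_eq_zero hw0, coeff_ι_mul, hd, mul_one]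

theorem coeff_add_ι_mul_t_pow {b : R} {m : ℕ} (hb : S.deg b < m) (a : D) (i : ℕ) :
    S.coeff (b + S.ι a * S.t ^ m) i = if i = m then a else S.coeff b i := by
  rw [coeff_add, coeff_ι_mul_t_pow]
  split_ifs with h₁ h₂ h₂
  · rw [h₂, S.coeff_eq_zero_of_deg_lt hb, zero_add]
  · exact absurd h₁.symm h₂
  · exact absurd h₂.symm h₁
  · rw [add_zero]

theorem deg_add_ι_mul_t_pow_le {b : R} {m : ℕ} (hb : S.deg b < m) (a : D) :
    S.deg (b + S.ι a * S.t ^ m) ≤ m :=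
  S.deg_le_of_coeff_eq_zero fun i hi => by
    rw [coeff_add_ι_mul_t_pow _ hb, if_neg hi.ne', S.coeff_eq_zero_of_deg_lt (hb.trans hi)]

theorem add_ι_mul_t_pow_ne_zero {b : R} {m : ℕ} (hb : S.deg b < m) (hb0 : b ≠ 0) (a : D) :
    b + S.ι a * S.t ^ m ≠ 0 :=
  S.ne_zero_of_coeff_ne_zero (i := S.deg b) <| by
    rw [coeff_add_ι_mul_t_pow _ hb, if_neg hb.ne]
    exact S.coeff_deg_ne_zero hb0

theorem Monic.eq_one_of_deg_eq_zero {f : R} (hf : S.Monic f) (h : S.deg f = 0) : f = 1 := by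
  rw [S.eq_ι_coeff_zero_of_deg_eq_zero h, ← h, hf, map_one]

def Reduced (f r : R) : Prop := r = 0 ∨ S.deg r < S.deg f

theorem reduced_iff_coeff_eq_zero {f r : R} :
    S.Reduced f r ↔ ∀ i, S.deg f ≤ i → S.coeff r i = 0 := by
  refine ⟨?_, fun h => or_iff_not_imp_left.mpr fun hr => ?_⟩
  · rintro (rfl | hr) i hi
    · exact S.coeff_zero i
    · exact S.coeff_eq_zero_of_deg_lt (by omega)
  · by_contra! hle
    exact S.coeff_deg_ne_zero hr (h _ hle)

theorem Reduced.add {f r s : R} (hr : S.Reduced f r) (hs : S.Reduced f s) :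
    S.Reduced f (r + s) := by
  rw [reduced_iff_coeff_eq_zero] at *
  intro i hi
  rw [coeff_add, hr i hi, hs i hi, add_zero]

theorem Reduced.ι_mul {f r : R} (a : D) (hr : S.Reduced f r) : S.Reduced f (S.ι a * r) := by
  rw [reduced_iff_coeff_eq_zero] at *
  intro i hi
  rw [coeff_ι_mul, hr i hi, mul_zero]

theorem Reduced.eq_zero_of_eq_mul {f r w : R} (hr : S.Reduced f r) (h : r = w * f) : r = 0 := by
  by_contra hr0
  have hw : w ≠ 0 := by rintro rfl; exact hr0 (by rw [h, zero_mul])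
  have hf : f ≠ 0 := by rintro rfl; exact hr0 (by rw [h, mul_zero])
  have hdeg := S.deg_mul hw hf
  rw [← h] at hdeg
  rcases hr with hr | hr
  · exact hr0 hr
  · omega

theorem eq_of_mul_add_eq_mul_add {f q₁ q₂ r₁ r₂ : R} (hf : f ≠ 0)
    (h : q₁ * f + r₁ = q₂ * f + r₂) (h₁ : S.Reduced f r₁) (h₂ : S.Reduced f r₂) : r₁ = r₂ := by
  suffices hq : q₁ = q₂ by
    subst hq
    exact add_left_cancel h
  by_contra hne
  have hq : q₁ - q₂ ≠ 0 := sub_ne_zero_of_ne hne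
  have hdiff : (q₁ - q₂) * f = r₂ - r₁ := by
    rw [sub_mul, sub_eq_sub_iff_add_eq_add, h, add_comm]
  rw [reduced_iff_coeff_eq_zero] at h₁ h₂
  apply S.coeff_mul_deg_add_ne_zero hq hf
  rw [hdiff, coeff_sub, h₁ _ (by omega), h₂ _ (by omega), sub_zero]

section Remainder

variable (modr : R → R → R) (hmodr : S.IsModR modr) {f : R} (hf : 1 ≤ S.deg f)
include hmodr hf

theorem exists_eq_mul_add_modr (x : R) : ∃ q, x = q * f + modr x f := (hmodr x f hf).1

theorem reduced_modr (x : R) : S.Reduced f (modr x f) := (hmodr x f hf).2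

theorem modr_eq_of_eq_mul_add {x q r : R} (h : x = q * f + r) (hr : S.Reduced f r) :
    modr x f = r := by
  obtain ⟨q', hq'⟩ := S.exists_eq_mul_add_modr modr hmodr hf x
  exact S.eq_of_mul_add_eq_mul_add (S.ne_zero_of_one_le_deg hf) (hq'.symm.trans h)
    (S.reduced_modr modr hmodr hf x) hr

theorem modr_eq_self {x : R} (hx : S.Reduced f x) : modr x f = x :=
  S.modr_eq_of_eq_mul_add modr hmodr hf (q := 0) (by rw [zero_mul, zero_add]) hx

theorem modr_add (x y : R) : modr (x + y) f = modr x f + modr y f := by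
  obtain ⟨qx, hx⟩ := S.exists_eq_mul_add_modr modr hmodr hf x
  obtain ⟨qy, hy⟩ := S.exists_eq_mul_add_modr modr hmodr hf y
  refine S.modr_eq_of_eq_mul_add modr hmodr hf (q := qx + qy) ?_
    ((S.reduced_modr modr hmodr hf x).add S (S.reduced_modr modr hmodr hf y))
  conv_lhs => rw [hx, hy]
  noncomm_ring

theorem modr_ι_mul (a : D) (x : R) : modr (S.ι a * x) f = S.ι a * modr x f := by
  obtain ⟨q, hq⟩ := S.exists_eq_mul_add_modr modr hmodr hf x
  refine S.modr_eq_of_eq_mul_add modr hmodr hf (q := S.ι a * q) ?_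
    ((S.reduced_modr modr hmodr hf x).ι_mul S a)
  conv_lhs => rw [hq]
  noncomm_ring

theorem modr_add_mul (x w : R) : modr (x + w * f) f = modr x f := by
  obtain ⟨q, hq⟩ := S.exists_eq_mul_add_modr modr hmodr hf x
  refine S.modr_eq_of_eq_mul_add modr hmodr hf (q := q + w) ?_ (S.reduced_modr modr hmodr hf x)
  conv_lhs => rw [hq]
  noncomm_ring

theorem modr_eq_zero_iff {x : R} : modr x f = 0 ↔ ∃ q, x = q * f := by
  refine ⟨fun h => ?_, fun ⟨q, hq⟩ => ?_⟩
  · obtain ⟨q, hq⟩ := S.exists_eq_mul_add_modr modr hmodr hf x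
    exact ⟨q, by rw [hq, h, add_zero]⟩
  · rw [← S.modr_eq_self modr hmodr hf (Or.inl rfl), hq, ← zero_add (q * f),
      S.modr_add_mul modr hmodr hf]

end Remainder

noncomputable def ofVec {k : ℕ} (v : Fin k → D) : R := ∑ i, S.ι (v i) * S.t ^ (i : ℕ)

def coeffVec (k : ℕ) (x : R) : Fin k → D := fun i => S.coeff x i

theorem coeff_ofVec {k : ℕ} (v : Fin k → D) (i : ℕ) :
    S.coeff (S.ofVec v) i = if h : i < k then v ⟨i, h⟩ else 0 := by
  rw [ofVec, coeff_finsetSum]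
  simp_rw [coeff_ι_mul_t_pow]
  split_ifs with h
  · rw [Finset.sum_eq_single ⟨i, h⟩ (fun j _ hj => if_neg fun hji => hj (Fin.ext hji))
      (by simp), if_pos rfl]
  · exact Finset.sum_eq_zero fun j _ => if_neg fun (hji : (j : ℕ) = i) => h (hji ▸ j.isLt)

theorem coeffVec_ofVec {k : ℕ} (v : Fin k → D) : S.coeffVec k (S.ofVec v) = v :=
  funext fun i => by rw [coeffVec, coeff_ofVec, dif_pos i.isLt]

theorem ofVec_coeffVec {k : ℕ} {x : R} (h : ∀ i, k ≤ i → S.coeff x i = 0) :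
    S.ofVec (S.coeffVec k x) = x :=
  S.coeff_ext _ _ fun i => by
    rw [coeff_ofVec]
    split_ifs with hi
    · rfl
    · exact (h i (by omega)).symm

theorem reduced_ofVec {k : ℕ} {f : R} (hk : k ≤ S.deg f) (v : Fin k → D) :
    S.Reduced f (S.ofVec v) :=
  S.reduced_iff_coeff_eq_zero.mpr fun i hi => by rw [coeff_ofVec, dif_neg (by omega)]

theorem ofVec_coeffVec_of_reduced {f x : R} {k : ℕ} (hx : S.Reduced f x) (hk : S.deg f ≤ k) :
    S.ofVec (S.coeffVec k x) = x :=
  S.ofVec_coeffVec fun i hi => S.reduced_iff_coeff_eq_zero.mp hx i (hk.trans hi)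

@[simp] theorem ofVec_zero {k : ℕ} : S.ofVec (0 : Fin k → D) = 0 := by simp [ofVec]

theorem ofVec_add {k : ℕ} (v w : Fin k → D) : S.ofVec (v + w) = S.ofVec v + S.ofVec w := by
  simp only [ofVec, Pi.add_apply, map_add, add_mul, Finset.sum_add_distrib]

theorem ofVec_smul {k : ℕ} (a : D) (v : Fin k → D) : S.ofVec (a • v) = S.ι a * S.ofVec v := by
  simp only [ofVec, Pi.smul_apply, smul_eq_mul, map_mul, mul_assoc, Finset.mul_sum]

def IsAnnihilatorGen (f c d : R) : Prop := ∀ x, (∃ s, x * c = s * f) ↔ ∃ w, x = w * d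

theorem one_le_deg_of_isAnnihilatorGen {c f d : R} (hd : IsAnnihilatorGen f c d) (hdm : S.Monic d)
    (hc : c ≠ 0) (hcf : S.deg c < S.deg f) : 1 ≤ S.deg d := by
  by_contra! h0
  obtain ⟨s, hs⟩ := (hd 1).mpr ⟨1, by rw [hdm.eq_one_of_deg_eq_zero S (by omega), one_mul]⟩
  rw [one_mul] at hs
  have hs0 : s ≠ 0 := by rintro rfl; exact hc (by rw [hs, zero_mul])
  have := S.deg_mul hs0 (S.ne_zero_of_one_le_deg (x := f) (by omega))
  rw [← hs] at this
  omega

section Generator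

variable (modr : R → R → R) (hmodr : S.IsModR modr)
include hmodr

theorem exists_monic_eq_span (I : Submodule R R) (hI : I ≠ ⊥) :
    ∃ g, S.Monic g ∧ I = Submodule.span R {g} := by
  classical
  have hex : ∃ N, ∃ x ∈ I, x ≠ 0 ∧ S.deg x = N := by
    obtain ⟨x, hxI, hx⟩ := Submodule.exists_mem_ne_zero_of_ne_bot hI
    exact ⟨_, x, hxI, hx, rfl⟩
  obtain ⟨x, hxI, hx, hxdeg⟩ := Nat.find_spec hex
  have hmin : ∀ y ∈ I, y ≠ 0 → S.deg x ≤ S.deg y :=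
    fun y hyI hy => hxdeg ▸ Nat.find_min' hex ⟨y, hyI, hy, rfl⟩
  have hlc := S.coeff_deg_ne_zero hx
  set g := S.ι (S.coeff x (S.deg x))⁻¹ * x
  have hgdeg : S.deg g = S.deg x := S.deg_ι_mul (inv_ne_zero hlc) x
  have hgI : g ∈ I := I.smul_mem _ hxI
  have hg : S.Monic g := by rw [Monic, hgdeg, coeff_ι_mul, inv_mul_cancel₀ hlc]
  refine ⟨g, hg, le_antisymm (fun y hyI => ?_) ((Submodule.span_singleton_le_iff_mem g I).mpr hgI)⟩
  rw [Submodule.mem_span_singleton]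
  rcases Nat.eq_zero_or_pos (S.deg g) with h0 | hpos
  · exact ⟨y, by rw [hg.eq_one_of_deg_eq_zero S h0, smul_eq_mul, mul_one]⟩
  obtain ⟨q, hq⟩ := S.exists_eq_mul_add_modr modr hmodr hpos y
  suffices hr : modr y g = 0 from ⟨q, by rw [smul_eq_mul, hq, hr, add_zero]⟩
  by_contra hr
  have hrI : modr y g ∈ I := by
    rw [show modr y g = y - q • g by rw [smul_eq_mul]; exact eq_sub_of_add_eq' hq.symm]
    exact I.sub_mem hyI (I.smul_mem q hgI)
  have := hmin _ hrI hr
  rcases S.reduced_modr modr hmodr hpos y with h | h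
  · exact hr h
  · omega

theorem exists_mul_add_mul_eq_one {c f : R} (hf : S.Irred f) (hc : c ≠ 0)
    (hcf : S.deg c < S.deg f) : ∃ u v, u * c + v * f = 1 := by
  have hf0 : f ≠ 0 := S.ne_zero_of_one_le_deg (by omega)
  have hI : Submodule.span R {c, f} ≠ ⊥ := fun h =>
    hc ((Submodule.eq_bot_iff _).mp h c (Submodule.subset_span (by simp)))
  obtain ⟨g, hg, hspan⟩ := S.exists_monic_eq_span modr hmodr _ hI
  obtain ⟨qc, hqc⟩ := Submodule.mem_span_singleton.mp
    (hspan ▸ Submodule.subset_span (by simp) : c ∈ Submodule.span R {g})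
  obtain ⟨qf, hqf⟩ := Submodule.mem_span_singleton.mp
    (hspan ▸ Submodule.subset_span (by simp) : f ∈ Submodule.span R {g})
  rw [smul_eq_mul] at hqc hqf
  rcases Nat.eq_zero_or_pos (S.deg g) with h0 | hpos
  · have h1 : (1 : R) ∈ Submodule.span R {c, f} := by
      rw [hspan, ← hg.eq_one_of_deg_eq_zero S h0]
      exact Submodule.mem_span_singleton_self g
    exact Submodule.mem_span_pair.mp h1
  · have hqc0 : qc ≠ 0 := by rintro rfl; exact hc (by rw [← hqc, zero_mul])
    have hqf0 : qf ≠ 0 := by rintro rfl; exact hf0 (by rw [← hqf, zero_mul])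
    have hdc := S.deg_mul hqc0 hg.ne_zero
    have hdf := S.deg_mul hqf0 hg.ne_zero
    rw [hqc] at hdc
    rw [hqf] at hdf
    exact absurd ⟨qf, g, by omega, by omega, by omega, by omega, hqf.symm⟩ hf.2

theorem exists_isAnnihilatorGen {b c f : R} (hb : b ≠ 0) (hbc : ∃ s, b * c = s * f) :
    ∃ d, S.Monic d ∧ IsAnnihilatorGen f c d := by
  set I := (Submodule.span R {f}).comap (LinearMap.toSpanSingleton R R c)
  have hmem : ∀ x, x ∈ I ↔ ∃ s, x * c = s * f := fun x => by
    simp only [I, Submodule.mem_comap, LinearMap.toSpanSingleton_apply, smul_eq_mul,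
      Submodule.mem_span_singleton, eq_comm]
  have hI : I ≠ ⊥ := fun h => hb ((Submodule.eq_bot_iff _).mp h b ((hmem b).mpr hbc))
  obtain ⟨d, hd, hspan⟩ := S.exists_monic_eq_span modr hmodr I hI
  refine ⟨d, hd, fun x => ?_⟩
  rw [← hmem, hspan, Submodule.mem_span_singleton]
  simp only [smul_eq_mul, eq_comm]

end Generator

section MulRem

variable (modr : R → R → R) (hmodr : S.IsModR modr) {f : R} (hf : 1 ≤ S.deg f)

noncomputable def mulRem (c : R) (k l : ℕ) : (Fin k → D) →ₗ[D] (Fin l → D) where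
  toFun x := S.coeffVec l (modr (S.ofVec x * c) f)
  map_add' x y := funext fun i => by
    simp only [ofVec_add, add_mul, S.modr_add modr hmodr hf, coeffVec, coeff_add, Pi.add_apply]
  map_smul' a x := funext fun i => by
    simp only [ofVec_smul, mul_assoc, S.modr_ι_mul modr hmodr hf, coeffVec, coeff_ι_mul,
      Pi.smul_apply, smul_eq_mul, RingHom.id_apply]

theorem mulRem_apply (c : R) {k l : ℕ} (x : Fin k → D) :
    S.mulRem modr hmodr hf c k l x = S.coeffVec l (modr (S.ofVec x * c) f) := rfl

include hmodr hf

theorem mulRem_bijective {c d : R} (hd : IsAnnihilatorGen f c d) (hd1 : 1 ≤ S.deg d)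
    (hbez : ∃ u v, u * c + v * f = 1) {k l : ℕ} (hk : S.deg d = k) (hl : S.deg f = l) :
    Function.Bijective (S.mulRem modr hmodr hf c k l) := by
  subst hk hl
  refine ⟨(injective_iff_map_eq_zero _).mpr fun x hx => ?_, fun y => ?_⟩
  · rw [mulRem_apply] at hx
    have hmod : modr (S.ofVec x * c) f = 0 := by
      rw [← S.ofVec_coeffVec_of_reduced (S.reduced_modr modr hmodr hf _) le_rfl, hx, ofVec_zero]
    obtain ⟨w, hw⟩ := (hd _).mp ((S.modr_eq_zero_iff modr hmodr hf).mp hmod)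
    rw [← S.coeffVec_ofVec x, (S.reduced_ofVec le_rfl x).eq_zero_of_eq_mul S hw]
    exact funext fun i => S.coeff_zero i
  · obtain ⟨u, v, huv⟩ := hbez
    obtain ⟨e, he⟩ := (hd d).mpr ⟨1, (one_mul d).symm⟩
    obtain ⟨q, hq⟩ := S.exists_eq_mul_add_modr modr hmodr hd1 (S.ofVec y * u)
    refine ⟨S.coeffVec _ (modr (S.ofVec y * u) d), ?_⟩
    have hY : S.Reduced f (S.ofVec y) := S.reduced_ofVec le_rfl y
    rw [mulRem_apply, S.ofVec_coeffVec_of_reduced (S.reduced_modr modr hmodr hd1 _) le_rfl,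
      eq_sub_of_add_eq' hq.symm]
    have hrc : (S.ofVec y * u - q * d) * c = S.ofVec y + (-(S.ofVec y * v) - q * e) * f :=
      calc (S.ofVec y * u - q * d) * c = S.ofVec y * (u * c) - q * (d * c) := by noncomm_ring
        _ = S.ofVec y * (1 - v * f) - q * (e * f) := by rw [he, eq_sub_of_add_eq huv]
        _ = S.ofVec y + (-(S.ofVec y * v) - q * e) * f := by noncomm_ring
    rw [hrc, S.modr_add_mul modr hmodr hf, S.modr_eq_self modr hmodr hf hY, coeffVec_ofVec]

theorem deg_eq_of_isAnnihilatorGen {c d : R} (hd : IsAnnihilatorGen f c d) (hd1 : 1 ≤ S.deg d)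
    (hbez : ∃ u v, u * c + v * f = 1) : S.deg d = S.deg f := by
  simpa using (LinearEquiv.ofBijective _
    (S.mulRem_bijective modr hmodr hf hd hd1 hbez rfl rfl)).finrank_eq

end MulRem

end SkewPaper.SkewPolyData

namespace SkewPaper

variable {F' K R : Type*} [Field F'] [Field K] [Algebra F' K] [Ring R]

noncomputable def twistRotate (σ' : K ≃ₐ[F'] K) (n : ℕ) : (Fin n → K) ≃ₗ[F'] (Fin n → K) :=
  LinearEquiv.funCongrLeft F' K (finRotate n).symm ≪≫ₗ
    LinearEquiv.piCongrRight fun _ => σ'.toLinearEquiv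

namespace SkewPolyData

variable (S : SkewPolyData K R)

/-- On coefficient vectors of remainders mod a monic `g` of degree `n + 1`, `x ↦ t x mod g` is
`twistRotate` followed by this matrix (see `remShift_apply`). -/
def shiftMatrix (n : ℕ) (g : R) : Matrix (Fin (n + 1)) (Fin (n + 1)) K :=
  Matrix.of fun i j => (if i = j ∧ i ≠ 0 then 1 else 0) - if j = 0 then S.coeff g i else 0

theorem shiftMatrix_mulVec (n : ℕ) (g : R) (w : Fin (n + 1) → K) (i : Fin (n + 1)) :
    (S.shiftMatrix n g).mulVec w i = (if i ≠ 0 then w i else 0) - S.coeff g i * w 0 := by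
  by_cases hi : i = 0 <;>
    simp [shiftMatrix, Matrix.mulVec, dotProduct, sub_mul, Finset.sum_sub_distrib, ite_and, hi]

theorem det_shiftMatrix (n : ℕ) (g : R) : (S.shiftMatrix n g).det = -S.coeff g 0 := by
  rw [Matrix.det_of_isLowerTriangular, Fin.prod_univ_succ]
  · simp [shiftMatrix, Fin.succ_ne_zero]
  · intro i j hij
    have hij : i < j := OrderDual.toDual_lt_toDual.mp hij
    have hj : j ≠ 0 := (lt_of_le_of_lt (Fin.zero_le i) hij).ne'
    simp [shiftMatrix, hij.ne, hj]

theorem t_mul_ofVec_comp_finRotate {g : R} {n : ℕ} (hg : S.deg g = n + 1) (hgm : S.Monic g)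
    (v : Fin (n + 1) → K) :
    S.t * S.ofVec (v ∘ finRotate (n + 1)) =
      S.ι (S.σ (v 0)) * g + S.ofVec ((S.shiftMatrix n g).mulVec (S.σ ∘ v)) := by
  refine S.coeff_ext _ _ fun k => ?_
  rw [coeff_add, coeff_ι_mul, coeff_ofVec]
  rcases k with _ | j
  · simp [coeff_t_mul_zero, shiftMatrix_mulVec, mul_comm]
  rw [coeff_t_mul_succ, coeff_ofVec]
  rcases lt_trichotomy j n with hj | rfl | hj
  · have hrot : finRotate (n + 1) ⟨j, by omega⟩ = ⟨j + 1, by omega⟩ := by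
      rw [finRotate_of_lt hj]
    have hne : (⟨j + 1, by omega⟩ : Fin (n + 1)) ≠ 0 := by simp [Fin.ext_iff]
    rw [dif_pos (by omega), dif_pos (by omega), Function.comp_apply, hrot, shiftMatrix_mulVec,
      if_pos hne, Function.comp_apply, Function.comp_apply]
    ring
  · have hlead : S.coeff g (j + 1) = 1 := hg ▸ hgm
    rw [dif_pos (by omega), dif_neg (by omega), Function.comp_apply, finRotate_last', hlead,
      mul_one, add_zero]
    rfl
  · rw [dif_neg (by omega), dif_neg (by omega), map_zero,
      S.coeff_eq_zero_of_deg_lt (by omega), mul_zero, add_zero]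

noncomputable def remShift (σ' : K ≃ₐ[F'] K) (n : ℕ) (g : R) :
    (Fin (n + 1) → K) →ₗ[F'] (Fin (n + 1) → K) :=
  (Matrix.toLin' (S.shiftMatrix n g)).restrictScalars F' ∘ₗ (twistRotate σ' (n + 1)).toLinearMap

theorem det_remShift (σ' : K ≃ₐ[F'] K) (n : ℕ) (g : R) :
    LinearMap.det (S.remShift σ' n g) =
      Algebra.norm F' (-S.coeff g 0) * LinearMap.det (twistRotate σ' (n + 1)).toLinearMap := by
  rw [remShift, LinearMap.det_comp, LinearMap.det_restrictScalars, LinearMap.det_toLin',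
    det_shiftMatrix]

section Similarity

variable (modr : R → R → R) (hmodr : S.IsModR modr)
include hmodr

theorem remShift_apply {σ' : K ≃ₐ[F'] K} (hσ : ∀ a, S.σ a = σ' a) {n : ℕ} {g : R}
    (hg : S.deg g = n + 1) (hgm : S.Monic g) (x : Fin (n + 1) → K) :
    S.remShift σ' n g x = S.coeffVec (n + 1) (modr (S.t * S.ofVec x) g) := by
  have key := S.t_mul_ofVec_comp_finRotate hg hgm (x ∘ (finRotate (n + 1)).symm)
  rw [Function.comp_assoc, Equiv.symm_comp_self, Function.comp_id] at key
  rw [S.modr_eq_of_eq_mul_add modr hmodr (by omega) key (S.reduced_ofVec hg.ge _),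
    coeffVec_ofVec]
  show Matrix.toLin' _ (twistRotate σ' (n + 1) x) = _
  rw [Matrix.toLin'_apply]
  congr 1
  exact funext fun i => (hσ _).symm

theorem mulRem_remShift {σ' : K ≃ₐ[F'] K} (hσ : ∀ a, S.σ a = σ' a) {n : ℕ} {c d f e : R}
    (hf1 : 1 ≤ S.deg f) (hfdeg : S.deg f = n + 1) (hfm : S.Monic f) (hd : S.deg d = n + 1)
    (hdm : S.Monic d) (he : d * c = e * f) (x : Fin (n + 1) → K) :
    S.mulRem modr hmodr hf1 c (n + 1) (n + 1) (S.remShift σ' n d x) =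
      S.remShift σ' n f (S.mulRem modr hmodr hf1 c (n + 1) (n + 1) x) := by
  have hd1 : 1 ≤ S.deg d := by omega
  set X := S.ofVec x
  rw [S.remShift_apply modr hmodr hσ hd hdm, S.remShift_apply modr hmodr hσ hfdeg hfm,
    mulRem_apply, mulRem_apply,
    S.ofVec_coeffVec_of_reduced (S.reduced_modr modr hmodr hd1 _) hd.le,
    S.ofVec_coeffVec_of_reduced (S.reduced_modr modr hmodr hf1 _) hfdeg.le]
  obtain ⟨q, hq⟩ := S.exists_eq_mul_add_modr modr hmodr hd1 (S.t * X)
  obtain ⟨q', hq'⟩ := S.exists_eq_mul_add_modr modr hmodr hf1 (X * c)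
  have h₁ : modr (S.t * X) d * c = S.t * X * c + -(q * e) * f := by
    rw [eq_sub_of_add_eq' hq.symm, sub_mul, mul_assoc q, he]
    noncomm_ring
  have h₂ : S.t * modr (X * c) f = S.t * X * c + -(S.t * q') * f := by
    rw [eq_sub_of_add_eq' hq'.symm]
    noncomm_ring
  rw [h₁, h₂, S.modr_add_mul modr hmodr hf1, S.modr_add_mul modr hmodr hf1]

theorem norm_coeff_zero_eq_of_isAnnihilatorGen
    (hσ : ∀ a : F', S.σ (algebraMap F' K a) = algebraMap F' K a) {c d f : R} (hf1 : 1 ≤ S.deg f)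
    (hfm : S.Monic f) (hdm : S.Monic d) (hd : IsAnnihilatorGen f c d) (hdf : S.deg d = S.deg f)
    (hbez : ∃ u v, u * c + v * f = 1) :
    Algebra.norm F' (S.coeff d 0) = Algebra.norm F' (S.coeff f 0) := by
  obtain ⟨n, hn⟩ : ∃ n, S.deg f = n + 1 := ⟨S.deg f - 1, by omega⟩
  obtain ⟨e, he⟩ := (hd d).mpr ⟨1, (one_mul d).symm⟩
  set σ' : K ≃ₐ[F'] K := AlgEquiv.ofRingEquiv (f := S.σ) hσ
  set Ψ := (LinearEquiv.ofBijective _ (S.mulRem_bijective modr hmodr hf1 hd (hdf ▸ hf1) hbez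
    (hdf.trans hn) hn)).restrictScalars F'
  have hconj : S.remShift σ' n f = Ψ.toLinearMap ∘ₗ S.remShift σ' n d ∘ₗ Ψ.symm.toLinearMap := by
    refine LinearMap.ext fun y => ?_
    conv_lhs => rw [← Ψ.apply_symm_apply y]
    exact (S.mulRem_remShift modr hmodr (fun _ => rfl) hf1 hn hfm (hdf.trans hn) hdm he _).symm
  have hdet := congrArg LinearMap.det hconj
  rw [LinearMap.det_conj, det_remShift, det_remShift] at hdet
  have hrot := LinearEquiv.isUnit_det' (twistRotate σ' (n + 1))
  rw [← neg_one_mul (S.coeff f 0), ← neg_one_mul (S.coeff d 0), map_mul, map_mul] at hdet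
  have hneg := (isUnit_one.neg (α := K)).map (Algebra.norm F')
  exact (hneg.mul_left_cancel (hrot.mul_right_cancel hdet)).symm

theorem coeff_ne_zero_and_norm_eq_of_mul_mem
    (hσ : ∀ a : F', S.σ (algebraMap F' K a) = algebraMap F' K a) {b c f : R} (hfm : S.Monic f)
    (hirr : S.Irred f) (hc : c ≠ 0) (hcf : S.deg c < S.deg f) (hb : b ≠ 0)
    (hbdeg : S.deg b ≤ S.deg f) (hbc : ∃ s, b * c = s * f) :
    S.coeff b (S.deg f) ≠ 0 ∧ Algebra.norm F' (S.coeff b 0) =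
      Algebra.norm F' (S.coeff b (S.deg f)) * Algebra.norm F' (S.coeff f 0) := by
  obtain ⟨d, hdm, hd⟩ := S.exists_isAnnihilatorGen modr hmodr hb hbc
  have hd1 := S.one_le_deg_of_isAnnihilatorGen hd hdm hc hcf
  have hbez := S.exists_mul_add_mul_eq_one modr hmodr hirr hc hcf
  have hf1 : 1 ≤ S.deg f := by omega
  have hdf := S.deg_eq_of_isAnnihilatorGen modr hmodr hf1 hd hd1 hbez
  obtain ⟨w, hw⟩ := (hd b).mp hbc
  have hbd := S.eq_ι_mul_of_eq_mul_of_deg_le hdm hw (hdf ▸ hbdeg)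
  rw [hdf] at hbd
  refine ⟨fun h0 => hb (by rw [hbd, h0, map_zero, zero_mul]), ?_⟩
  conv_lhs => rw [hbd, coeff_ι_mul, map_mul]
  rw [S.norm_coeff_zero_eq_of_isAnnihilatorGen modr hmodr hσ hf1 hfm hdm hd hdf hbez]

end Similarity

end SkewPolyData

end SkewPaper

theorem division_algebra_over_field_from_norm_condition_general
    {F K Rg : Type*} [Field F] [Field K] [Algebra F K]
    (σg : K ≃ₐ[F] K)
    [Ring Rg] (S : SkewPolyData K Rg) (hσ : ∀ a : K, S.σ a = σg a)
    (modr : Rg → Rg → Rg) (hmodr : S.IsModR modr)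
    (f : Rg) (m : ℕ) (hdegf : S.deg f = m) (hmonic : S.Monic f)
    (hirr : S.Irred f)
    (ν : K) (ρ : K ≃+* K)
    (F' : Type*) [Field F'] [Algebra F' K] [FiniteDimensional F' K]
    (hF' : ∀ a : K, (∃ c : F', algebraMap F' K c = a) ↔ (σg a = a ∧ ρ a = a))
    (hnorm : Algebra.norm F' (S.const f) * Algebra.norm F' ν ≠ 1) :
    ∀ b c : Rg, S.deg b < m → S.deg c < m → b ≠ 0 → c ≠ 0 →
      S.circ modr f ν ρ m b c ≠ 0 := by
  intro b c hb hc hb0 hc0 hzero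
  subst hdegf
  have hfix (a : F') := (hF' (algebraMap F' K a)).mp ⟨a, rfl⟩
  obtain ⟨hα, hN⟩ := S.coeff_ne_zero_and_norm_eq_of_mul_mem modr hmodr
    (fun a => (hσ _).trans (hfix a).1) hmonic hirr hc0 hc (S.add_ι_mul_t_pow_ne_zero hb hb0 _)
    (S.deg_add_ι_mul_t_pow_le hb (ν * ρ (S.const b)))
    ((S.modr_eq_zero_iff modr hmodr (by omega)).mp hzero)
  simp only [S.coeff_add_ι_mul_t_pow hb, if_pos, if_neg (show 0 ≠ S.deg f by omega)] at hα hN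
  have hb00 : S.coeff b 0 ≠ 0 := fun h => hα (by rw [SkewPolyData.const, h, map_zero, mul_zero])
  have hρ : Algebra.norm F' (ρ (S.coeff b 0)) = Algebra.norm F' (S.coeff b 0) :=
    Algebra.norm_eq_of_algEquiv (AlgEquiv.ofRingEquiv (f := ρ) fun a => (hfix a).2) _
  rw [map_mul, SkewPolyData.const, hρ] at hN
  refine hnorm (mul_left_cancel₀ (Algebra.norm_ne_zero_iff.mpr hb00) ?_)
  rw [SkewPolyData.const]
  linear_combination -hN

/-- Let `K/F` be a cyclic field extension of degree `n` with
`Gal(K/F) = ⟨σ⟩`, `R = K[t;σ]`, and `f ∈ R` monic irreducible of degree `m` with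
`gcrd(f,t) = 1` and `deg(h) = mn`. Let `ν ∈ K`, `ρ ∈ Aut(K)`, `F' = Fix(ρ) ∩ F` with
`F/F'` finite. Then the algebra `S(ν,ρ,f) = (R_m,∘)`, with multiplication
`b∘c = (b + νρ(b₀)t^m)·c mod_r f`, is a division algebra over `F'` if
`N_{K/F'}(a₀)·N_{K/F'}(ν) ≠ 1`. -/
theorem division_algebra_over_field_from_norm_condition
    {F K Rg : Type*} [Field F] [Field K] [Algebra F K] [IsGalois F K] [FiniteDimensional F K]
    (n : ℕ) (hn : Module.finrank F K = n)
    (σg : K ≃ₐ[F] K) (hgen : ∀ τ : K ≃ₐ[F] K, τ ∈ Subgroup.zpowers σg) (hordσ : orderOf σg = n)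
    [Ring Rg] (S : SkewPolyData K Rg) (hσ : ∀ a : K, S.σ a = σg a)
    (modr : Rg → Rg → Rg) (hmodr : S.IsModR modr)
    (f : Rg) (m : ℕ) (hdegf : S.deg f = m) (hmonic : S.Monic f)
    (hirr : S.Irred f) (hcop : S.CoprimeT f)
    (h : Rg) (hh : Polynomial F) (hmclm : S.IsMclm n 1 (algebraMap F K) f h hh)
    (hdegh : S.deg h = m * n)
    (ν : K) (ρ : K ≃+* K)
    (F' : Type*) [Field F'] [Algebra F' K] [FiniteDimensional F' K]
    (hF' : ∀ a : K, (∃ c : F', algebraMap F' K c = a) ↔ (σg a = a ∧ ρ a = a))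
    (hnorm : Algebra.norm F' (S.const f) * Algebra.norm F' ν ≠ 1) :
    ∀ b c : Rg, S.deg b < m → S.deg c < m → b ≠ 0 → c ≠ 0 →
      S.circ modr f ν ρ m b c ≠ 0 :=
  division_algebra_over_field_from_norm_condition_general σg S hσ modr hmodr f m hdegf hmonic hirr ν
    ρ F' hF' hnorm
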